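/- Let ℜ = (S,(𝒦,𝒢),(X,ℬ),(ℱ,𝒯)) be a Riesz system in which Z and ℱ are topological vector spaces, every ℱ_B (B∈ℬ) is a bounded subset of ℱ, and every bounded subset of Z is relatively complete and perfect. Then every continuous linear map ℓ : ℱ → Z is a Riesz integral over ℜ. -/

import Mathlib

open Filter Set Topology
open scoped Pointwise

universe u v w

/-- A member of `unif M`: a closed, translation-invariant, symmetric entourage of the
uniform commutative monoid `M`. -/
def IsUnifEnt (M : Type*) [AddCommMonoid M] [UniformSpace M] (W : Set (M × M)) : Prop :=
  W ∈ uniformity M ∧ IsClosed W ∧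
    (∀ p ∈ W, ∀ t : M, (p.1 + t, p.2 + t) ∈ W) ∧ ∀ p ∈ W, (p.2, p.1) ∈ W

/-- `f` is supported by `α` (written `f ≺ α`): `f` vanishes off some `κ ∈ 𝒦` with `κ ⊆ α`. -/
def SupportedBy {S : Type u} {X : Type v} [Zero X]
    (𝒦 : Set (Set S)) (f : S → X) (α : Set S) : Prop :=
  ∃ κ ∈ 𝒦, κ ⊆ α ∧ ∀ s ∉ κ, f s = 0

/-- `f` equals `x` over `α`: `f` is identically `x` on some `γ ∈ 𝒢` containing `α`. -/
def EqualsOver {S : Type u} {X : Type v}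
    (𝒢 : Set (Set S)) (f : S → X) (x : X) (α : Set S) : Prop :=
  ∃ γ ∈ 𝒢, α ⊆ γ ∧ ∀ s ∈ γ, f s = x

/-- `ℱ_B`: members of `ℱ` with range contained in `B`. -/
def FB {S : Type u} {X : Type v} (ℱ : Set (S → X)) (B : Set X) : Set (S → X) :=
  {f | f ∈ ℱ ∧ Set.range f ⊆ B}

/-- the `ℬ`-hull of `x`: intersection of all members of `ℬ` containing `x`. -/
def BHull {X : Type v} (ℬ : Set (Set X)) (x : X) : Set X :=
  ⋂₀ {B | B ∈ ℬ ∧ x ∈ B}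

/-- the `ℬ`-hull of a subset `A` of `X`. -/
def BHullS {X : Type v} (ℬ : Set (Set X)) (A : Set X) : Set X :=
  ⋂₀ {B | B ∈ ℬ ∧ A ⊆ B}

/-- A field of subsets of `S`. -/
def IsSetField {S : Type u} (ℰ : Set (Set S)) : Prop :=
  Set.univ ∈ ℰ ∧ (∀ A ∈ ℰ, Aᶜ ∈ ℰ) ∧ ∀ A ∈ ℰ, ∀ B ∈ ℰ, A ∪ B ∈ ℰ

/-- `ℰ`: the smallest field of subsets of `S` containing `𝒦 ∪ 𝒢`. -/
def genField {S : Type u} (𝒦 𝒢 : Set (Set S)) : Set (Set S) :=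
  ⋂₀ {ℰ | 𝒦 ∪ 𝒢 ⊆ ℰ ∧ IsSetField ℰ}

/-- A Riesz system `(S,(𝒦,𝒢),(X,ℬ),(ℱ,𝒯))` (Assumptions 2.3 of the paper). -/
structure RieszSystem {S : Type u} {X : Type v} [AddCommMonoid X] [UniformSpace X]
    (𝒦 𝒢 : Set (Set S)) (ℬ : Set (Set X)) (ℱ : Set (S → X))
    (𝒯 : Filter ((S → X) × (S → X))) : Prop where
  K_empty : ∅ ∈ 𝒦
  K_union : ∀ κ₁ ∈ 𝒦, ∀ κ₂ ∈ 𝒦, κ₁ ∪ κ₂ ∈ 𝒦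
  G_empty : ∅ ∈ 𝒢
  G_union : ∀ γ₁ ∈ 𝒢, ∀ γ₂ ∈ 𝒢, γ₁ ∪ γ₂ ∈ 𝒢
  G_inter : ∀ γ₁ ∈ 𝒢, ∀ γ₂ ∈ 𝒢, γ₁ ∩ γ₂ ∈ 𝒢
  KG_diff : ∀ κ ∈ 𝒦, ∀ γ ∈ 𝒢, κ \ γ ∈ 𝒦 ∧ γ \ κ ∈ 𝒢
  KG_interpose : ∀ κ ∈ 𝒦, ∀ γ ∈ 𝒢, κ ⊆ γ →
      ∃ γ' ∈ 𝒢, ∃ κ' ∈ 𝒦, κ ⊆ γ' ∧ γ' ⊆ κ' ∧ κ' ⊆ γ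
  X_add : UniformContinuous fun p : X × X => p.1 + p.2
  B_nonempty : ℬ.Nonempty
  B_inter : ∀ 𝒞 ⊆ ℬ, 𝒞.Nonempty → ⋂₀ 𝒞 ∈ ℬ
  B_zero : ∀ B ∈ ℬ, (0 : X) ∈ B
  B_add : ∀ B ∈ ℬ, ∀ B' ∈ ℬ, ∃ C ∈ ℬ, B + B' ⊆ C
  B_cover : ∀ x : X, ∃ B ∈ ℬ, x ∈ B
  F_zero : (0 : S → X) ∈ ℱ
  F_add : ∀ f ∈ ℱ, ∀ g ∈ ℱ, f + g ∈ ℱ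
  T_refl : ∀ T ∈ 𝒯, ∀ f ∈ ℱ, (f, f) ∈ T
  T_symm : ∀ T ∈ 𝒯, ∃ V ∈ 𝒯, ∀ f g : S → X, (f, g) ∈ V → (g, f) ∈ T
  T_comp : ∀ T ∈ 𝒯, ∃ V ∈ 𝒯, ∀ f g h : S → X, (f, g) ∈ V → (g, h) ∈ V → (f, h) ∈ T
  T_add : ∀ T ∈ 𝒯, ∃ V ∈ 𝒯, ∀ f f' g g' : S → X,
      (f, f') ∈ V → (g, g') ∈ V → (f + g, f' + g') ∈ T
  F_range : ∀ f ∈ ℱ, ∃ B ∈ ℬ, Set.range f ⊆ B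
  F_partble : ∀ f ∈ ℱ, ∀ W ∈ uniformity X, ∃ G : Finset (Set S), ↑G ⊆ 𝒢 ∧
      (⋃ γ ∈ G, γ) = Set.univ ∧ ∀ γ ∈ G, ∀ s ∈ γ, ∀ t ∈ γ, (f s, f t) ∈ W
  F_urysohn : ∀ κ ∈ 𝒦, ∀ γ ∈ 𝒢, κ ⊆ γ → ∀ x : X, ∃ f ∈ ℱ,
      Set.range f ⊆ BHull ℬ x ∧ SupportedBy 𝒦 f γ ∧ EqualsOver 𝒢 f x κ
  F_ext : ∀ B ∈ ℬ, ∀ T ∈ 𝒯, ∃ U ∈ uniformity X, ∀ κ ∈ 𝒦, ∀ γ ∈ 𝒢, κ ⊆ γ →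
      ∀ f ∈ FB ℱ B, ∀ g ∈ FB ℱ B, SupportedBy 𝒦 f γ → SupportedBy 𝒦 g γ →
      (∃ ω ∈ 𝒢, κ ⊆ ω ∧ ω ⊆ γ ∧ ∀ s ∈ ω, (f s, g s) ∈ U) →
      ∃ p ∈ FB ℱ B, ∃ q ∈ FB ℱ B, SupportedBy 𝒦 p (γ \ κ) ∧
        SupportedBy 𝒦 q (γ \ κ) ∧ (f + p, g + q) ∈ T
  F_partunity : ∀ B ∈ ℬ, ∀ G : Finset (Set S), ↑G ⊆ 𝒢 → ∀ κ ∈ 𝒦, κ ⊆ (⋃ γ ∈ G, γ) →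
      ∀ f ∈ FB ℱ B, ∃ g : Set S → (S → X),
        (∀ γ ∈ G, g γ ∈ FB ℱ B ∧ SupportedBy 𝒦 (g γ) γ) ∧
        (∀ J : Finset (Set S), J ⊆ G → (∑ γ ∈ J, g γ) ∈ FB ℱ B) ∧
        ∀ s ∈ κ, f s = ∑ γ ∈ G, g γ s

/-- `f` and `g` are `ℰ`-separated. -/
def ESeparated {S : Type u} {X : Type v} [Zero X]
    (𝒦 𝒢 : Set (Set S)) (f g : S → X) : Prop :=
  ∃ E₁ ∈ genField 𝒦 𝒢, ∃ E₂ ∈ genField 𝒦 𝒢, Disjoint E₁ E₂ ∧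
    SupportedBy 𝒦 f E₁ ∧ SupportedBy 𝒦 g E₂

/-- `ℓ` is `ℰ`-additive. -/
def EAdditive {S : Type u} {X : Type v} {Z : Type w} [AddCommMonoid X] [AddCommMonoid Z]
    (𝒦 𝒢 : Set (Set S)) (ℱ : Set (S → X)) (ℓ : (S → X) → Z) : Prop :=
  ∀ f ∈ ℱ, ∀ g ∈ ℱ, ESeparated 𝒦 𝒢 f g → ℓ (f + g) = ℓ f + ℓ g

/-- `ℓ` is `s`-bounded over `ℬ`. -/
def SBounded {S : Type u} {X : Type v} {Z : Type w} [AddCommMonoid X]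
    [AddCommMonoid Z] [UniformSpace Z]
    (𝒦 𝒢 : Set (Set S)) (ℬ : Set (Set X)) (ℱ : Set (S → X)) (ℓ : (S → X) → Z) : Prop :=
  ∀ B ∈ ℬ, ∀ W : Set (Z × Z), IsUnifEnt Z W → ∀ G : ℕ → Set S, (∀ n, G n ∈ 𝒢) →
    (∀ m n : ℕ, m ≠ n → Disjoint (G m) (G n)) → ∃ m : ℕ, ∀ n > m,
      ∀ f ∈ FB ℱ B, ∀ g ∈ FB ℱ B, SupportedBy 𝒦 g (G n) → (ℓ f, ℓ (f + g)) ∈ W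

/-- `ℓ` is uniformly continuous on `A` with respect to the uniformity `𝒯`. -/
def UContOn {S : Type u} {X : Type v} {Z : Type w} [UniformSpace Z]
    (𝒯 : Filter ((S → X) × (S → X))) (A : Set (S → X)) (ℓ : (S → X) → Z) : Prop :=
  ∀ W ∈ uniformity Z, ∃ T ∈ 𝒯, ∀ f ∈ A, ∀ g ∈ A, (f, g) ∈ T → (ℓ f, ℓ g) ∈ W

/-- A relatively complete subset of a uniform space. -/
def RelComplete {Z : Type w} [UniformSpace Z] (A : Set Z) : Prop :=
  IsComplete (closure A)

/-- `ℓ` is a Riesz integral over the Riesz system `(S,(𝒦,𝒢),(X,ℬ),(ℱ,𝒯))`. -/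
def RieszIntegral {S : Type u} {X : Type v} {Z : Type w} [AddCommMonoid X]
    [AddCommMonoid Z] [UniformSpace Z]
    (𝒦 𝒢 : Set (Set S)) (ℬ : Set (Set X)) (ℱ : Set (S → X))
    (𝒯 : Filter ((S → X) × (S → X))) (ℓ : (S → X) → Z) : Prop :=
  EAdditive 𝒦 𝒢 ℱ ℓ ∧ SBounded 𝒦 𝒢 ℬ ℱ ℓ ∧
    ∀ B ∈ ℬ, UContOn 𝒯 (FB ℱ B) ℓ ∧ RelComplete (ℓ '' FB ℱ B)

/-- The members of a finite family of sets are pairwise disjoint. -/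
def PairwiseDisjFinset {S : Type u} (K : Finset (Set S)) : Prop :=
  ∀ κ₁ ∈ K, ∀ κ₂ ∈ K, κ₁ ≠ κ₂ → Disjoint κ₁ κ₂

/-- `α` is `W`-small with respect to `(h, B)`. -/
def WSmall {S : Type u} {X : Type v} {Z : Type w} [AddCommMonoid X] [AddCommMonoid Z]
    (𝒦 𝒢 : Set (Set S)) (h : Set S → X → Z) (B : Set X)
    (W : Set (Z × Z)) (α : Set S) : Prop :=
  ∃ γ ∈ 𝒢, α ⊆ γ ∧ ∀ K : Finset (Set S), ↑K ⊆ 𝒦 → PairwiseDisjFinset K →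
    (∀ κ ∈ K, κ ⊆ γ) → ∀ x y : Set S → X, (∀ κ ∈ K, x κ ∈ B) → (∀ κ ∈ K, y κ ∈ B) →
      (∑ κ ∈ K, h κ (x κ), ∑ κ ∈ K, h κ (x κ + y κ)) ∈ W

/-- `α` is regular with respect to `(h, 𝒦, 𝒢, ℬ)`. -/
def RegularSet {S : Type u} {X : Type v} {Z : Type w} [AddCommMonoid X]
    [AddCommMonoid Z] [UniformSpace Z]
    (𝒦 𝒢 : Set (Set S)) (ℬ : Set (Set X)) (h : Set S → X → Z) (α : Set S) : Prop :=
  ∀ B ∈ ℬ, ∀ V : Set (Z × Z), IsUnifEnt Z V →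
    ∃ κ ∈ 𝒦, ∃ γ ∈ 𝒢, κ ⊆ α ∧ α ⊆ γ ∧ WSmall 𝒦 𝒢 h B V (γ \ κ)

/-- `R_h`: the family of regular sets of `h`. -/
def RSet {S : Type u} {X : Type v} {Z : Type w} [AddCommMonoid X]
    [AddCommMonoid Z] [UniformSpace Z]
    (𝒦 𝒢 : Set (Set S)) (ℬ : Set (Set X)) (h : Set S → X → Z) : Set (Set S) :=
  {α | RegularSet 𝒦 𝒢 ℬ h α}

/-- `h` is uniformly partition continuous with respect to `(𝒦,𝒢,ℬ)`. -/
def UPartCont {S : Type u} {X : Type v} {Z : Type w} [AddCommMonoid X] [UniformSpace X]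
    [AddCommMonoid Z] [UniformSpace Z]
    (𝒦 𝒢 : Set (Set S)) (ℬ : Set (Set X)) (h : Set S → X → Z) : Prop :=
  ∀ W : Set (Z × Z), IsUnifEnt Z W → ∀ B ∈ ℬ, ∃ U ∈ uniformity X,
    ∀ R : Finset (Set S), ↑R ⊆ RSet 𝒦 𝒢 ℬ h → PairwiseDisjFinset R →
    ∀ x y : Set S → X, (∀ ρ ∈ R, x ρ ∈ B ∧ y ρ ∈ B ∧ (x ρ, y ρ) ∈ U) →
      (∑ ρ ∈ R, h ρ (x ρ), ∑ ρ ∈ R, h ρ (y ρ)) ∈ W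

/-- `h` is `s`-bounded with respect to `(𝒦,𝒢,ℬ)`. -/
def MSBounded {S : Type u} {X : Type v} {Z : Type w} [AddCommMonoid X]
    [AddCommMonoid Z] [UniformSpace Z]
    (𝒦 𝒢 : Set (Set S)) (ℬ : Set (Set X)) (h : Set S → X → Z) : Prop :=
  ∀ B ∈ ℬ, ∀ α : ℕ → Set S, (∀ n, α n ∈ RSet 𝒦 𝒢 ℬ h) →
    (∀ m n : ℕ, m ≠ n → Disjoint (α m) (α n)) → ∀ V : Set (Z × Z), IsUnifEnt Z V →
      ∃ m : ℕ, ∀ n > m, WSmall 𝒦 𝒢 h B V (α n)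

/-- `𝒱(h,𝒦,𝒢,B)`: all finite sums `∑_{ρ∈R} x_ρ.h(ρ)`. -/
def VSums {S : Type u} {X : Type v} {Z : Type w} [AddCommMonoid X]
    [AddCommMonoid Z] [UniformSpace Z]
    (𝒦 𝒢 : Set (Set S)) (ℬ : Set (Set X)) (h : Set S → X → Z) (B : Set X) : Set Z :=
  {z | ∃ R : Finset (Set S), ↑R ⊆ RSet 𝒦 𝒢 ℬ h ∧ PairwiseDisjFinset R ∧
    ∃ x : Set S → X, (∀ ρ ∈ R, x ρ ∈ B) ∧ z = ∑ ρ ∈ R, h ρ (x ρ)}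

/-- `z` is the limit of the net `(F κ x : κ ∈ 𝒦, κ ⊆ γ)` directed by inclusion. -/
def KBelowLim {S : Type u} {X : Type v} {Z : Type w} [TopologicalSpace Z]
    (𝒦 : Set (Set S)) (γ : Set S) (F : Set S → X → Z) (x : X) (z : Z) : Prop :=
  Tendsto (fun κ : {κ : Set S // κ ∈ 𝒦 ∧ κ ⊆ γ} => F κ.1 x) atTop (nhds z)

/-- `z` is the limit of the net `(F γ' x : γ' ∈ 𝒢, α ⊆ γ')` directed by reverse inclusion. -/
def GAboveLim {S : Type u} {X : Type v} {Z : Type w} [TopologicalSpace Z]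
    (𝒢 : Set (Set S)) (α : Set S) (F : Set S → X → Z) (x : X) (z : Z) : Prop :=
  Tendsto (fun γ : {γ : Set S // γ ∈ 𝒢 ∧ α ⊆ γ} => F γ.1 x) atBot (nhds z)

/-- `h` is a Riesz measure over `(𝒦,𝒢,ℬ)`. -/
def RieszMeasure {S : Type u} {X : Type v} {Z : Type w} [AddCommMonoid X] [UniformSpace X]
    [AddCommMonoid Z] [UniformSpace Z]
    (𝒦 𝒢 : Set (Set S)) (ℬ : Set (Set X)) (h : Set S → X → Z) : Prop :=
  𝒢 ⊆ RSet 𝒦 𝒢 ℬ h ∧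
  IsSetField (RSet 𝒦 𝒢 ℬ h) ∧
  (∀ ρ₁ ∈ RSet 𝒦 𝒢 ℬ h, ∀ ρ₂ ∈ RSet 𝒦 𝒢 ℬ h, Disjoint ρ₁ ρ₂ →
      ∀ x : X, h (ρ₁ ∪ ρ₂) x = h ρ₁ x + h ρ₂ x) ∧
  (∀ γ ∈ 𝒢, ∀ x : X, KBelowLim 𝒦 γ h x (h γ x)) ∧
  (∀ α : Set S, ∀ x : X, GAboveLim 𝒢 α h x (h α x)) ∧
  UPartCont 𝒦 𝒢 ℬ h ∧ MSBounded 𝒦 𝒢 ℬ h ∧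
  ∀ B ∈ ℬ, RelComplete (VSums 𝒦 𝒢 ℬ h B)

/-- The finite disjoint family `R` refines `Q`. -/
def RefinesF {S : Type u} (R Q : Finset (Set S)) : Prop :=
  ∀ ρ ∈ R, ∃ q ∈ Q, ρ ⊆ q

/-- `R` is a finite disjoint partition of `E` by sets regular for `h`. -/
def IsPartitionOf {S : Type u} {X : Type v} {Z : Type w} [AddCommMonoid X]
    [AddCommMonoid Z] [UniformSpace Z]
    (𝒦 𝒢 : Set (Set S)) (ℬ : Set (Set X)) (h : Set S → X → Z)
    (R : Finset (Set S)) (E : Set S) : Prop :=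
  ↑R ⊆ RSet 𝒦 𝒢 ℬ h ∧ PairwiseDisjFinset R ∧ (⋃ ρ ∈ R, ρ) = E

/-- `z = ∫_E f.dμ`. -/
def IsIntegralOf {S : Type u} {X : Type v} {Z : Type w} [AddCommMonoid X]
    [AddCommMonoid Z] [UniformSpace Z]
    (𝒦 𝒢 : Set (Set S)) (ℬ : Set (Set X)) (μ : Set S → X → Z)
    (E : Set S) (f : S → X) (z : Z) : Prop :=
  ∀ V ∈ nhds z, ∃ Q : Finset (Set S), IsPartitionOf 𝒦 𝒢 ℬ μ Q E ∧
    ∀ R : Finset (Set S), IsPartitionOf 𝒦 𝒢 ℬ μ R E → RefinesF R Q →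
      ∀ s : Set S → S, (∀ ρ ∈ R, s ρ ∈ ρ) → (∑ ρ ∈ R, μ ρ (f (s ρ))) ∈ V

/-- `ℱ*(x,κ,γ,B)`. -/
def FStar {S : Type u} {X : Type v} [Zero X]
    (𝒦 𝒢 : Set (Set S)) (ℱ : Set (S → X)) (x : X) (κ γ : Set S) (B : Set X) :
    Set (S → X) :=
  {f | f ∈ FB ℱ B ∧ EqualsOver 𝒢 f x κ ∧ SupportedBy 𝒦 f γ}

/-- `τ` is the set function `τ_ℓ` generated by `ℓ` on `𝒦`. -/
def IsTau {S : Type u} {X : Type v} {Z : Type w} [AddCommMonoid X] [UniformSpace Z]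
    (𝒦 𝒢 : Set (Set S)) (ℬ : Set (Set X)) (ℱ : Set (S → X))
    (ℓ : (S → X) → Z) (τ : Set S → X → Z) : Prop :=
  ∀ κ ∈ 𝒦, ∀ x : X, ∀ V ∈ nhds (τ κ x), ∃ β ∈ 𝒢, κ ⊆ β ∧
    ℓ '' FStar 𝒦 𝒢 ℱ x κ β (BHull ℬ x) ⊆ V

/-- `ξ = ξ_ℓ` is the pointwise limit of `τ = τ_ℓ` over `𝒦⁻(γ)`. -/
def IsXi {S : Type u} {X : Type v} {Z : Type w} [TopologicalSpace Z]
    (𝒦 𝒢 : Set (Set S)) (τ ξ : Set S → X → Z) : Prop :=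
  ∀ γ ∈ 𝒢, ∀ x : X, KBelowLim 𝒦 γ τ x (ξ γ x)

/-- `ν = ν_ℓ` is the pointwise limit of `ξ = ξ_ℓ` over `𝒢⁺(α)`. -/
def IsNu {S : Type u} {X : Type v} {Z : Type w} [TopologicalSpace Z]
    (𝒢 : Set (Set S)) (ξ ν : Set S → X → Z) : Prop :=
  ∀ α : Set S, ∀ x : X, GAboveLim 𝒢 α ξ x (ν α x)

/-- `S(W,B,ℓ)`. -/
def SWB {S : Type u} {X : Type v} {Z : Type w} [AddCommMonoid X]
    (𝒦 𝒢 : Set (Set S)) (ℱ : Set (S → X)) (ℓ : (S → X) → Z)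
    (W : Set (Z × Z)) (B : Set X) : Set (Set S) :=
  {γ | γ ∈ 𝒢 ∧ ∀ f ∈ FB ℱ B, ∀ g ∈ FB ℱ B, SupportedBy 𝒦 g γ → (ℓ f, ℓ (f + g)) ∈ W}

/-- `ℓ` has the Hammerstein property relative to `ℰ`. -/
def Hammerstein {S : Type u} {X : Type v} {Z : Type w} [AddCommMonoid X] [AddCommMonoid Z]
    (𝒦 𝒢 : Set (Set S)) (ℱ : Set (S → X)) (ℓ : (S → X) → Z) : Prop :=
  ∀ f ∈ ℱ, ∀ g₁ ∈ ℱ, ∀ g₂ ∈ ℱ, ESeparated 𝒦 𝒢 g₁ g₂ →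
    ℓ (f + g₁ + g₂) + ℓ f = ℓ (f + g₁) + ℓ (f + g₂)

/-- `ℓ` is quasi-additive. -/
def QuasiAdditive {S : Type u} {X : Type v} {Z : Type w} [AddCommMonoid X]
    [AddCommMonoid Z] [UniformSpace Z]
    (ℬ : Set (Set X)) (ℱ : Set (S → X)) (ℓ : (S → X) → Z) : Prop :=
  ∀ W : Set (Z × Z), IsUnifEnt Z W → ∀ B ∈ ℬ, ∃ V : Set (Z × Z), IsUnifEnt Z V ∧
    ∀ f ∈ FB ℱ B, ∀ g ∈ FB ℱ B, ((0 : Z), ℓ g) ∈ V → (ℓ f, ℓ (f + g)) ∈ W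

/-- A perfect subset of `Z`: any function whose finite partial sums all lie in the set
is summable. -/
def PerfectSet {Z : Type w} [AddCommMonoid Z] [TopologicalSpace Z] (A : Set Z) : Prop :=
  ∀ ⦃ι : Type w⦄ (g : ι → Z), (∀ J : Finset ι, ∑ i ∈ J, g i ∈ A) → Summable g

/-- A quasi-perfect subset of `Z`: any function whose finite partial sums all lie in the
set has a Cauchy net of finite partial sums. -/
def QuasiPerfectSet {Z : Type w} [AddCommMonoid Z] [UniformSpace Z] (A : Set Z) : Prop :=
  ∀ ⦃ι : Type w⦄ (g : ι → Z), (∀ J : Finset ι, ∑ i ∈ J, g i ∈ A) →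
    Cauchy (Filter.map (fun J : Finset ι => ∑ i ∈ J, g i) Filter.atTop)

/-- `α` is `U`-small with respect to `(ℓ, B)`. -/
def USmallOp {S : Type u}{X : Type v} {Z : Type w} [AddCommMonoid X] [Zero X]
    (𝒦 : Set (Set S)) (ℱ : Set (S → X)) (ℓ : (S → X) → Z) (B : Set X)
    (U : Set (Z × Z)) (α : Set S) : Prop :=
  ∀ f ∈ FB ℱ B, ∀ g ∈ FB ℱ B, SupportedBy 𝒦 g α → (ℓ f, ℓ (f + g)) ∈ U

/-- `ℓ` is `𝒢`-bounded. -/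
def GBounded {S : Type u} {X : Type v} {Z : Type w} [AddCommMonoid X]
    [AddCommMonoid Z] [UniformSpace Z]
    (𝒦 𝒢 : Set (Set S)) (ℬ : Set (Set X)) (ℱ : Set (S → X)) (ℓ : (S → X) → Z) : Prop :=
  ∀ U : Set (Z × Z), IsUnifEnt Z U → ∀ B ∈ ℬ, ∀ K ∈ 𝒦, ∀ 𝒢' ⊆ 𝒢, K ⊆ ⋃₀ 𝒢' →
    ∃ H : Finset (Set S), ↑H ⊆ 𝒢' ∧ USmallOp 𝒦 ℱ ℓ B U (K \ ⋃ γ ∈ H, γ)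

/-- `ℬ₀` (Notation 2.2). -/
def B0 {X : Type v} [AddCommMonoid X] (ℬ : Set (Set X)) : Set (Set X) :=
  ⋂₀ {ℋ | ℋ ⊆ ℬ ∧ (∀ 𝒞 ⊆ ℋ, 𝒞.Nonempty → ⋂₀ 𝒞 ∈ ℋ) ∧ ⋂₀ ℋ = {0} ∧
      (∀ x : X, BHull ℬ x ∈ ℋ) ∧ ∀ H₁ ∈ ℋ, ∀ H₂ ∈ ℋ, BHullS ℬ (H₁ + H₂) ∈ ℋ}

/-- `ℱ₀` (Notation 2.2). -/
def F0 {S : Type u} {X : Type v} [AddCommMonoid X]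
    (ℬ : Set (Set X)) (ℱ : Set (S → X)) : Set (S → X) :=
  {f | f ∈ ℱ ∧ ∃ B ∈ B0 ℬ, Set.range f ⊆ B}

/-- The uniformity of uniform convergence on `S`, as a filter on `(S → X) × (S → X)`. -/
def UnifConvFilter (S : Type u) (X : Type v) [UniformSpace X] :
    Filter ((S → X) × (S → X)) :=
  ⨅ V ∈ uniformity X, Filter.principal {p : (S → X) × (S → X) | ∀ s : S, (p.1 s, p.2 s) ∈ V}

/-- The additional conditions of Remark 2.5.1 on a Riesz system. -/
structure Remark251 {S : Type u} {X : Type v} [TopologicalSpace S]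
    [AddCommGroup X] [Module ℝ X] [UniformSpace X]
    (𝒦 𝒢 : Set (Set S)) (ℬ : Set (Set X)) (ℱ : Set (S → X))
    (𝒯 : Filter ((S → X) × (S → X))) : Prop where
  K_closed : ∀ κ ∈ 𝒦, IsClosed κ
  G_open : ∀ γ ∈ 𝒢, IsOpen γ
  B_def : ℬ = {B : Set X | IsClosed B ∧ TotallyBounded B}
  F_sub : ∀ f ∈ ℱ, Continuous f ∧ TotallyBounded (Set.range f)
  F_module : ∀ φ : S → ℝ, Continuous φ → TotallyBounded (Set.range φ) →
      ∀ f ∈ ℱ, (fun s => φ s • f s) ∈ ℱ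
  F_tensor : ∀ x : X, ∀ φ : S → ℝ, Continuous φ → TotallyBounded (Set.range φ) →
      (∃ κ ∈ 𝒦, ∀ s ∉ κ, φ s = 0) → (fun s => φ s • x) ∈ ℱ
  T_coarser : UnifConvFilter S X ≤ 𝒯

/-- `A` is a bounded subset of the "topological vector space" `(ℱ,𝒯)`:
it is absorbed by every `𝒯`-neighbourhood of `0`. -/
def FBddIn {S : Type u} {X : Type v} [AddCommGroup X] [Module ℝ X]
    (𝒯 : Filter ((S → X) × (S → X))) (A : Set (S → X)) : Prop :=
  ∀ T ∈ 𝒯, ∃ r : ℝ, 0 < r ∧ ∀ f ∈ A, ∀ c : ℝ, |c| ≤ r → ((0 : S → X), c • f) ∈ T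


/-!
A continuous linear `ℓ` is additive, so in particular `ℰ`-additive, and translation
invariance of `𝒯` upgrades its continuity at `0` to uniform continuity on `ℱ`. Since `ℱ_B` is
bounded and `ℓ` is continuous and homogeneous, `ℓ(ℱ_B)` is bounded, hence relatively complete
and perfect. For `s`-boundedness, functions `g n ∈ ℱ_B` supported by pairwise disjoint `G n`
have all their finite sums in `ℱ_B`, so perfectness makes `∑ ℓ (g n)` summable and
`ℓ (g n) → 0`.
-/

theorem SupportedBy.eq_zero_of_notMem {S : Type u} {X : Type v} [Zero X]
    {𝒦 : Set (Set S)} {f : S → X} {α : Set S} (hf : SupportedBy 𝒦 f α) {s : S}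
    (hs : s ∉ α) : f s = 0 := by
  obtain ⟨κ, -, hκα, hf0⟩ := hf
  exact hf0 s fun hsκ => hs (hκα hsκ)

theorem UContOn.mono {S : Type u} {X : Type v} {Z : Type w} [UniformSpace Z]
    {𝒯 : Filter ((S → X) × (S → X))} {A A' : Set (S → X)} {ℓ : (S → X) → Z}
    (h : UContOn 𝒯 A ℓ) (hA' : A' ⊆ A) : UContOn 𝒯 A' ℓ := fun W hW =>
  let ⟨T, hT, hTW⟩ := h W hW
  ⟨T, hT, fun f hf g hg => hTW f (hA' hf) g (hA' hg)⟩

theorem isVonNBounded_image_of_fBddIn {S : Type u} {X : Type v} {Z : Type w}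
    [AddCommGroup X] [Module ℝ X] [AddCommGroup Z] [Module ℝ Z] [TopologicalSpace Z]
    {ℱ A : Set (S → X)} {𝒯 : Filter ((S → X) × (S → X))} {ℓ : (S → X) → Z}
    (hA : FBddIn 𝒯 A) (hAℱ : A ⊆ ℱ) (hFsmul : ∀ c : ℝ, ∀ f ∈ ℱ, c • f ∈ ℱ)
    (hℓsmul : ∀ c : ℝ, ∀ f ∈ ℱ, ℓ (c • f) = c • ℓ f)
    (hcont0 : ∀ V ∈ 𝓝 (0 : Z), ∃ T ∈ 𝒯, ∀ g ∈ ℱ, ((0 : S → X), g) ∈ T → ℓ g ∈ V) :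
    Bornology.IsVonNBounded ℝ (ℓ '' A) := by
  intro V hV
  obtain ⟨T, hT, hTV⟩ := hcont0 V hV
  obtain ⟨r, hr, hrT⟩ := hA T hT
  rw [absorbs_iff_eventually_nhdsNE_zero]
  filter_upwards [nhdsWithin_le_nhds (Metric.closedBall_mem_nhds (0 : ℝ) hr)] with c hc
  rintro _ ⟨f, hf, rfl⟩
  show c • ℓ f ∈ V
  rw [← hℓsmul c f (hAℱ hf)]
  exact hTV _ (hFsmul c f (hAℱ hf)) (hrT f hf c (by simpa using hc))

namespace RieszSystem

open Function

section Monoid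

variable {S : Type u} {X : Type v} [AddCommMonoid X] [UniformSpace X]
  {𝒦 𝒢 : Set (Set S)} {ℬ : Set (Set X)} {ℱ : Set (S → X)} {𝒯 : Filter ((S → X) × (S → X))}
  {Z : Type w} {ℓ : (S → X) → Z}

theorem zero_mem_FB (hRS : RieszSystem 𝒦 𝒢 ℬ ℱ 𝒯) {B : Set X} (hB : B ∈ ℬ) :
    (0 : S → X) ∈ FB ℱ B :=
  ⟨hRS.F_zero, Set.range_subset_iff.2 fun _ => hRS.B_zero B hB⟩

theorem sum_mem (hRS : RieszSystem 𝒦 𝒢 ℬ ℱ 𝒯) {ι : Type*} {g : ι → S → X}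
    (hg : ∀ i, g i ∈ ℱ) (J : Finset ι) : ∑ i ∈ J, g i ∈ ℱ :=
  Finset.sum_induction g (· ∈ ℱ) (fun a b ha hb => hRS.F_add a ha b hb) hRS.F_zero
    fun i _ => hg i

/-- At each point at most one summand is nonzero, so the sum takes its values in `B`. -/
theorem sum_mem_FB_of_pairwise_disjoint (hRS : RieszSystem 𝒦 𝒢 ℬ ℱ 𝒯) {B : Set X}
    (hB : B ∈ ℬ) {ι : Type*} {G : ι → Set S} (hG : Pairwise (Disjoint on G))
    {g : ι → S → X} (hg : ∀ i, g i ∈ FB ℱ B) (hgG : ∀ i, ∀ s ∉ G i, g i s = 0)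
    (J : Finset ι) : ∑ i ∈ J, g i ∈ FB ℱ B := by
  refine ⟨hRS.sum_mem (fun i => (hg i).1) J, ?_⟩
  rintro _ ⟨s, rfl⟩
  rw [Finset.sum_apply]
  by_cases hs : ∃ i ∈ J, s ∈ G i
  · obtain ⟨i, hiJ, hsi⟩ := hs
    rw [Finset.sum_eq_single_of_mem i hiJ fun j _ hji =>
      hgG j s fun hsj => Set.disjoint_left.1 (hG hji) hsj hsi]
    exact (hg i).2 ⟨s, rfl⟩
  · push Not at hs
    rw [Finset.sum_eq_zero fun i hi => hgG i s (hs i hi)]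
    exact hRS.B_zero B hB

theorem map_zero_of_additive [AddCommGroup Z] (hRS : RieszSystem 𝒦 𝒢 ℬ ℱ 𝒯)
    (hℓadd : ∀ f ∈ ℱ, ∀ g ∈ ℱ, ℓ (f + g) = ℓ f + ℓ g) : ℓ 0 = 0 := by
  simpa using hℓadd 0 hRS.F_zero 0 hRS.F_zero

theorem map_sum_of_additive [AddCommMonoid Z] (hRS : RieszSystem 𝒦 𝒢 ℬ ℱ 𝒯)
    (hℓ0 : ℓ 0 = 0) (hℓadd : ∀ f ∈ ℱ, ∀ g ∈ ℱ, ℓ (f + g) = ℓ f + ℓ g)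
    {ι : Type*} {g : ι → S → X} (hg : ∀ i, g i ∈ ℱ) (J : Finset ι) :
    ℓ (∑ i ∈ J, g i) = ∑ i ∈ J, ℓ (g i) := by
  induction J using Finset.cons_induction with
  | empty => simpa using hℓ0
  | cons i J hi ih =>
    rw [Finset.sum_cons, Finset.sum_cons, hℓadd _ (hg i) _ (hRS.sum_mem hg J), ih]

theorem summable_of_perfectSet [AddCommMonoid Z] [TopologicalSpace Z]
    (hRS : RieszSystem 𝒦 𝒢 ℬ ℱ 𝒯) {B : Set X} (hB : B ∈ ℬ) (hℓ0 : ℓ 0 = 0)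
    (hℓadd : ∀ f ∈ ℱ, ∀ g ∈ ℱ, ℓ (f + g) = ℓ f + ℓ g) (hperf : PerfectSet (ℓ '' FB ℱ B))
    {ι : Type w} {G : ι → Set S} (hG : Pairwise (Disjoint on G)) {g : ι → S → X}
    (hg : ∀ i, g i ∈ FB ℱ B) (hgG : ∀ i, ∀ s ∉ G i, g i s = 0) :
    Summable fun i => ℓ (g i) :=
  hperf _ fun J => ⟨_, hRS.sum_mem_FB_of_pairwise_disjoint hB hG hg hgG J,
    hRS.map_sum_of_additive hℓ0 hℓadd (fun i => (hg i).1) J⟩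

theorem sBounded_of_perfectSet [AddCommGroup Z] [UniformSpace Z] [IsUniformAddGroup Z]
    (hRS : RieszSystem 𝒦 𝒢 ℬ ℱ 𝒯) (hℓadd : ∀ f ∈ ℱ, ∀ g ∈ ℱ, ℓ (f + g) = ℓ f + ℓ g)
    (hperf : ∀ B ∈ ℬ, PerfectSet (ℓ '' FB ℱ B)) : SBounded 𝒦 𝒢 ℬ ℱ ℓ := by
  intro B hB W hW G hG hGdisj
  set N := {z : Z | ((0 : Z), z) ∈ W}
  -- `g n` is a witness of `G n` being bad if there is one, and `0` otherwise.
  have hwitness : ∀ n, ∃ g ∈ FB ℱ B, SupportedBy 𝒦 g (G n) ∧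
      (ℓ g ∈ N → ∀ g' ∈ FB ℱ B, SupportedBy 𝒦 g' (G n) → ℓ g' ∈ N) := by
    intro n
    by_cases h : ∀ g' ∈ FB ℱ B, SupportedBy 𝒦 g' (G n) → ℓ g' ∈ N
    · exact ⟨0, hRS.zero_mem_FB hB, ⟨∅, hRS.K_empty, empty_subset _, fun _ _ => rfl⟩,
        fun _ => h⟩
    · push Not at h
      obtain ⟨g, hg, hgG, hgN⟩ := h
      exact ⟨g, hg, hgG, fun h => absurd h hgN⟩
  choose g hg hgG hgN using hwitness
  have hsum : Summable fun n => ℓ (g n) :=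
    Equiv.ulift.summable_iff.1 <| hRS.summable_of_perfectSet hB
      (hRS.map_zero_of_additive hℓadd) hℓadd (hperf B hB) (G := G ∘ ULift.down)
      (fun i j hij => hGdisj _ _ (ULift.down_injective.ne hij))
      (fun i => hg i.down) (fun i _ hs => (hgG i.down).eq_zero_of_notMem hs)
  obtain ⟨m, hm⟩ := eventually_atTop.1 <|
    hsum.tendsto_atTop_zero.eventually_mem (mem_nhds_left 0 hW.1)
  refine ⟨m, fun n hn f hf g' hg' hg'G => ?_⟩
  have hW' := hW.2.2.1 _ (hgN n (hm n hn.le) g' hg' hg'G) (ℓ f)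
  rwa [zero_add, add_comm, ← hℓadd f hf.1 g' hg'.1] at hW'

end Monoid

section Group

variable {S : Type u} {X : Type v} [AddCommGroup X] [UniformSpace X]
  {𝒦 𝒢 : Set (Set S)} {ℬ : Set (Set X)} {ℱ : Set (S → X)} {𝒯 : Filter ((S → X) × (S → X))}
  {Z : Type w} [AddCommGroup Z] {ℓ : (S → X) → Z}

theorem map_neg_of_additive (hRS : RieszSystem 𝒦 𝒢 ℬ ℱ 𝒯)
    (hℓadd : ∀ f ∈ ℱ, ∀ g ∈ ℱ, ℓ (f + g) = ℓ f + ℓ g) {f : S → X} (hf : f ∈ ℱ)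
    (hnf : -f ∈ ℱ) : ℓ (-f) = -ℓ f := by
  have h := hℓadd f hf (-f) hnf
  rw [add_neg_cancel, hRS.map_zero_of_additive hℓadd] at h
  exact (neg_eq_of_add_eq_zero_right h.symm).symm

/-- Translating by `-f` moves a `𝒯`-close pair `(f, g)` to a pair `(0, g - f)` close to `0`. -/
theorem uContOn_of_continuousAt_zero [UniformSpace Z] [IsUniformAddGroup Z]
    (hRS : RieszSystem 𝒦 𝒢 ℬ ℱ 𝒯) (hFneg : ∀ f ∈ ℱ, -f ∈ ℱ)
    (hℓadd : ∀ f ∈ ℱ, ∀ g ∈ ℱ, ℓ (f + g) = ℓ f + ℓ g)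
    (hcont0 : ∀ V ∈ 𝓝 (0 : Z), ∃ T ∈ 𝒯, ∀ g ∈ ℱ, ((0 : S → X), g) ∈ T → ℓ g ∈ V) :
    UContOn 𝒯 ℱ ℓ := by
  intro W hW
  rw [uniformity_eq_comap_nhds_zero Z] at hW
  obtain ⟨V, hV, hVW⟩ := hW
  obtain ⟨T₀, hT₀, hT₀V⟩ := hcont0 V hV
  obtain ⟨T, hT, hTadd⟩ := hRS.T_add T₀ hT₀
  refine ⟨T, hT, fun f hf g hg hfg => hVW ?_⟩
  have hshift := hTadd f g (-f) (-f) hfg (hRS.T_refl T hT _ (hFneg f hf))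
  rw [add_neg_cancel] at hshift
  have hgf := hT₀V _ (hRS.F_add g hg _ (hFneg f hf)) hshift
  rwa [hℓadd g hg _ (hFneg f hf), hRS.map_neg_of_additive hℓadd hf (hFneg f hf),
    ← sub_eq_add_neg] at hgf

end Group

end RieszSystem

theorem stmt9_general {S : Type u} {X : Type v} {Z : Type w}
    [AddCommGroup X] [Module ℝ X] [UniformSpace X]
    [AddCommGroup Z] [Module ℝ Z] [UniformSpace Z] [IsUniformAddGroup Z]
    {𝒦 𝒢 : Set (Set S)} {ℬ : Set (Set X)} {ℱ : Set (S → X)}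
    {𝒯 : Filter ((S → X) × (S → X))}
    (hRS : RieszSystem 𝒦 𝒢 ℬ ℱ 𝒯)
    (hFsmul : ∀ c : ℝ, ∀ f ∈ ℱ, c • f ∈ ℱ)
    (hFBbd : ∀ B ∈ ℬ, FBddIn 𝒯 (FB ℱ B))
    (hZbd : ∀ A : Set Z, Bornology.IsVonNBounded ℝ A → RelComplete A ∧ PerfectSet A)
    (ℓ : (S → X) → Z)
    (hlin_add : ∀ f ∈ ℱ, ∀ g ∈ ℱ, ℓ (f + g) = ℓ f + ℓ g)
    (hlin_smul : ∀ c : ℝ, ∀ f ∈ ℱ, ℓ (c • f) = c • ℓ f)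
    (hcont : ∀ f ∈ ℱ, ∀ V ∈ nhds (ℓ f), ∃ T ∈ 𝒯, ∀ g ∈ ℱ, (f, g) ∈ T → ℓ g ∈ V) :
    RieszIntegral 𝒦 𝒢 ℬ ℱ 𝒯 ℓ := by
  have hcont0 : ∀ V ∈ 𝓝 (0 : Z), ∃ T ∈ 𝒯, ∀ g ∈ ℱ, ((0 : S → X), g) ∈ T → ℓ g ∈ V :=
    fun V hV => hcont 0 hRS.F_zero V (by rwa [hRS.map_zero_of_additive hlin_add])
  have hbdd : ∀ B ∈ ℬ, Bornology.IsVonNBounded ℝ (ℓ '' FB ℱ B) := fun B hB =>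
    isVonNBounded_image_of_fBddIn (hFBbd B hB) (fun _ hf => hf.1) hFsmul hlin_smul hcont0
  have hFneg : ∀ f ∈ ℱ, -f ∈ ℱ := fun f hf => by simpa using hFsmul (-1) f hf
  refine ⟨fun f hf g hg _ => hlin_add f hf g hg,
    hRS.sBounded_of_perfectSet hlin_add fun B hB => (hZbd _ (hbdd B hB)).2,
    fun B hB => ⟨?_, (hZbd _ (hbdd B hB)).1⟩⟩
  exact (hRS.uContOn_of_continuousAt_zero hFneg hlin_add hcont0).mono fun _ hf => hf.1

theorem stmt9 {S : Type u} {X : Type v} {Z : Type w}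
    [AddCommGroup X] [Module ℝ X] [UniformSpace X] [T2Space X]
    [AddCommGroup Z] [Module ℝ Z] [UniformSpace Z] [IsUniformAddGroup Z]
    [ContinuousSMul ℝ Z] [T2Space Z]
    {𝒦 𝒢 : Set (Set S)} {ℬ : Set (Set X)} {ℱ : Set (S → X)}
    {𝒯 : Filter ((S → X) × (S → X))}
    (hRS : RieszSystem 𝒦 𝒢 ℬ ℱ 𝒯)
    (hFsmul : ∀ c : ℝ, ∀ f ∈ ℱ, c • f ∈ ℱ)
    (hFBbd : ∀ B ∈ ℬ, FBddIn 𝒯 (FB ℱ B))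
    (hZbd : ∀ A : Set Z, Bornology.IsVonNBounded ℝ A → RelComplete A ∧ PerfectSet A)
    (ℓ : (S → X) → Z)
    (hlin_add : ∀ f ∈ ℱ, ∀ g ∈ ℱ, ℓ (f + g) = ℓ f + ℓ g)
    (hlin_smul : ∀ c : ℝ, ∀ f ∈ ℱ, ℓ (c • f) = c • ℓ f)
    (hcont : ∀ f ∈ ℱ, ∀ V ∈ nhds (ℓ f), ∃ T ∈ 𝒯, ∀ g ∈ ℱ, (f, g) ∈ T → ℓ g ∈ V) :
    RieszIntegral 𝒦 𝒢 ℬ ℱ 𝒯 ℓ :=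
  stmt9_general hRS hFsmul hFBbd hZbd ℓ hlin_add hlin_smul hcont
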